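/- Let w ∈ L^∞(ℝ²) satisfy 0 ≤ w ≤ λ a.e. and ∫ w = 1, and set ε = (πλ)^{-1/2}. Then for every x ∈ ℝ² and every R > 1: ∫_{ℝ²} ln(ε/|x-y|) w(y) dy ≤ 1/2 - ln R · ∫_{ℝ²\B_{Rε}(x)} w(y) dy. -/

import Mathlib

open MeasureTheory Real Set Filter Topology ENNReal
noncomputable section
abbrev E2 := EuclideanSpace ℝ (Fin 2)

lemma aux_int_mul_log {ε : ℝ} (hε : 0 < ε) :
    ∫ y in (0:ℝ)..ε, y * Real.log y = ε/2*(ε*Real.log ε) - ε^2/4 := by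
  have h := intervalIntegral.integral_eq_sub_of_hasDeriv_right_of_le hε.le
    (f := fun y => y/2*(y*Real.log y) - y^2/4) (f' := fun y => y * Real.log y)
    (by fun_prop) ?_ (Real.continuous_mul_log.intervalIntegrable _ _)
  · rw [h]; norm_num
  · intro y hy
    have : HasDerivAt (fun y => y/2*(y*Real.log y) - y^2/4) (y * Real.log y) y := by
      have h1 : HasDerivAt (fun y : ℝ => y/2) (1/2) y := (hasDerivAt_id y).div_const 2
      have h2 : HasDerivAt (fun y : ℝ => y * Real.log y) (Real.log y + 1) y :=
        Real.hasDerivAt_mul_log hy.1.ne'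
      have h3 : HasDerivAt (fun y : ℝ => y^2/4) ((2*y^1)/4) y := (hasDerivAt_pow 2 y).div_const 4
      have := (h1.mul h2).sub h3
      refine this.congr_deriv ?_
      ring
    exact this.hasDerivWithinAt

lemma aux_int_log_div {ε : ℝ} (hε : 0 < ε) :
    ∫ y in (0:ℝ)..ε, y * Real.log (ε / y) = ε^2/4 := by
  have hcongr : ∀ y ∈ Set.uIcc (0:ℝ) ε, y * Real.log (ε / y) = y * Real.log ε - y * Real.log y := by
    intro y hy
    rcases eq_or_ne y 0 with rfl | hy0
    · simp
    · rw [Real.log_div hε.ne' hy0]; ring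
  rw [intervalIntegral.integral_congr hcongr,
    intervalIntegral.integral_sub ((by fun_prop : Continuous fun y : ℝ => y * Real.log ε).intervalIntegrable _ _)
      (Real.continuous_mul_log.intervalIntegrable _ _),
    aux_int_mul_log hε]
  have : ∫ y in (0:ℝ)..ε, y * Real.log ε = (∫ y in (0:ℝ)..ε, y) * Real.log ε :=
    intervalIntegral.integral_mul_const _ _
  rw [this, integral_id]
  ring

lemma aux_dim : Module.finrank ℝ E2 = 2 := by
  simp [finrank_euclideanSpace]

lemma aux_vol_ball : volume (Metric.ball (0:E2) 1) = ENNReal.ofReal π := by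
  rw [EuclideanSpace.volume_ball]
  norm_num [Real.sq_sqrt Real.pi_nonneg, Real.Gamma_two]

lemma aux_lintegral_polar (g : ℝ → ℝ≥0∞) (hg : Measurable g) :
    ∫⁻ x : E2, g ‖x‖ = (volume : Measure E2).toSphere Set.univ *
      ∫⁻ y in Ioi (0:ℝ), ENNReal.ofReal (y^1) * g y := by
  have h0 : (volume : Measure E2).restrict {(0:E2)}ᶜ = volume :=
    MeasureTheory.restrict_compl_singleton _
  have e := (volume : Measure E2).measurePreserving_homeomorphUnitSphereProd
  rw [aux_dim] at e
  have hgm : Measurable (fun p : Metric.sphere (0:E2) 1 × Ioi (0:ℝ) => g p.2.1) :=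
    hg.comp (measurable_subtype_coe.comp measurable_snd)
  calc ∫⁻ x : E2, g ‖x‖ = ∫⁻ x in {(0:E2)}ᶜ, g ‖x‖ := by rw [h0]
    _ = ∫⁻ x : ({(0:E2)}ᶜ : Set E2), g ‖x.1‖ ∂(volume.comap Subtype.val) :=
        (lintegral_subtype_comap (measurableSet_singleton _).compl _).symm
    _ = ∫⁻ p : Metric.sphere (0:E2) 1 × Ioi (0:ℝ), g p.2.1
          ∂((volume : Measure E2).toSphere.prod (Measure.volumeIoiPow (2-1))) := by
        rw [← e.lintegral_comp (f := fun p : Metric.sphere (0:E2) 1 × Ioi (0:ℝ) => g p.2.1) hgm]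
        simp
    _ = (volume : Measure E2).toSphere Set.univ * ∫⁻ y : Ioi (0:ℝ), g y.1
          ∂(Measure.volumeIoiPow 1) := by
        rw [lintegral_prod (fun p : Metric.sphere (0:E2) 1 × Ioi (0:ℝ) => g p.2.1) hgm.aemeasurable]
        simp [lintegral_const, mul_comm]
    _ = (volume : Measure E2).toSphere Set.univ *
          ∫⁻ y : Ioi (0:ℝ), ENNReal.ofReal (y.1^1) * g y.1 ∂(Measure.comap Subtype.val volume) := by
        rw [Measure.volumeIoiPow, lintegral_withDensity_eq_lintegral_mul _
          (f := fun r : Ioi (0:ℝ) => ENNReal.ofReal (r.1 ^ 1))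
          (by exact (measurable_subtype_coe.pow_const 1).ennreal_ofReal)
          (g := fun y : Ioi (0:ℝ) => g y.1) (by exact hg.comp measurable_subtype_coe)]
        rfl
    _ = _ := by
        rw [lintegral_subtype_comap measurableSet_Ioi (fun y => ENNReal.ofReal (y^1) * g y)]

lemma aux_f_meas {ε : ℝ} : Measurable ((Iio ε).indicator (fun r => Real.log (ε / r))) :=
  (Real.measurable_log.comp (measurable_const.div measurable_id)).indicator measurableSet_Iio

lemma aux_f_nonneg {ε r : ℝ} (hε : 0 < ε) (hr : 0 ≤ r) :
    0 ≤ (Iio ε).indicator (fun r => Real.log (ε / r)) r := by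
  rcases lt_or_ge r ε with h | h
  · rcases eq_or_lt_of_le hr with rfl | hr'
    · simp [Set.indicator]
    · simp only [Set.indicator, mem_Iio, h, if_true]
      exact Real.log_nonneg ((one_le_div hr').2 h.le)
  · simp [Set.indicator, not_lt.2 h]

lemma aux_f_le {ε r : ℝ} (hε : 0 < ε) (hr : 0 < r) :
    r * (Iio ε).indicator (fun r => Real.log (ε / r)) r ≤ ε := by
  rcases lt_or_ge r ε with h | h
  · simp only [Set.indicator, mem_Iio, h, if_true]
    calc r * Real.log (ε / r) ≤ r * (ε / r) := by
          refine mul_le_mul_of_nonneg_left ?_ hr.le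
          refine (Real.log_le_sub_one_of_pos (div_pos hε hr)).trans ?_
          linarith
      _ = ε := by field_simp
  · simp [Set.indicator, not_lt.2 h, hε.le]

lemma aux_phi_eq {ε : ℝ} (z : E2) :
    (Metric.ball (0:E2) ε).indicator (fun z => Real.log (ε / ‖z‖)) z
      = (Iio ε).indicator (fun r => Real.log (ε / r)) ‖z‖ := by
  by_cases h : ‖z‖ < ε <;> simp [Set.indicator, mem_ball_zero_iff, mem_Iio, h]

lemma aux_phi_integrable {ε : ℝ} (hε : 0 < ε) :
    Integrable (fun z : E2 => (Metric.ball (0:E2) ε).indicator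
      (fun z => Real.log (ε / ‖z‖)) z) := by
  set f := (Iio ε).indicator (fun r => Real.log (ε / r)) with hf
  have hmeas : Measurable (fun z : E2 => (Metric.ball (0:E2) ε).indicator
      (fun z => Real.log (ε / ‖z‖)) z) := by
    have : (fun z : E2 => (Metric.ball (0:E2) ε).indicator
        (fun z => Real.log (ε / ‖z‖)) z) = fun z => f ‖z‖ := funext fun z => aux_phi_eq z
    rw [this]
    exact aux_f_meas.comp measurable_norm
  refine ⟨hmeas.aestronglyMeasurable, ?_⟩
  rw [hasFiniteIntegral_iff_ofReal (Eventually.of_forall fun z => by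
    rw [aux_phi_eq]; exact aux_f_nonneg hε (norm_nonneg z))]
  have : (fun z : E2 => ENNReal.ofReal ((Metric.ball (0:E2) ε).indicator
      (fun z => Real.log (ε / ‖z‖)) z)) = fun z => (fun r => ENNReal.ofReal (f r)) ‖z‖ := by
    funext z; rw [aux_phi_eq]
  rw [this, aux_lintegral_polar _ aux_f_meas.ennreal_ofReal]
  refine ENNReal.mul_lt_top (measure_lt_top _ _) ?_
  have hb : ∀ y ∈ Ioi (0:ℝ), ENNReal.ofReal (y^1) * ENNReal.ofReal (f y)
      ≤ (Ioo 0 ε).indicator (fun _ => ENNReal.ofReal ε) y := by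
    intro y hy
    rw [← ENNReal.ofReal_mul (pow_nonneg hy.out.le 1), pow_one]
    rcases lt_or_ge y ε with h | h
    · simp only [Set.indicator, mem_Ioo, hy.out, h, and_self, if_true]
      exact ENNReal.ofReal_le_ofReal (aux_f_le hε hy.out)
    · have : f y = 0 := by simp [hf, Set.indicator, not_lt.2 h]
      simp [this]
  calc ∫⁻ y in Ioi (0:ℝ), ENNReal.ofReal (y^1) * ENNReal.ofReal (f y)
      ≤ ∫⁻ y in Ioi (0:ℝ), (Ioo 0 ε).indicator (fun _ => ENNReal.ofReal ε) y :=
        setLIntegral_mono (measurable_const.indicator measurableSet_Ioo) hb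
    _ ≤ ∫⁻ y, (Ioo 0 ε).indicator (fun _ => ENNReal.ofReal ε) y :=
        setLIntegral_le_lintegral _ _
    _ = ENNReal.ofReal ε * volume (Ioo 0 ε) := lintegral_indicator_const measurableSet_Ioo _
    _ < ∞ := ENNReal.mul_lt_top ENNReal.ofReal_lt_top (by simp [Real.volume_Ioo])

lemma aux_phi_integral {ε : ℝ} (hε : 0 < ε) :
    ∫ z : E2, (Metric.ball (0:E2) ε).indicator (fun z => Real.log (ε / ‖z‖)) z
      = π * ε^2 / 2 := by
  set f := (Iio ε).indicator (fun r => Real.log (ε / r)) with hf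
  have h1 : ∫ z : E2, (Metric.ball (0:E2) ε).indicator (fun z => Real.log (ε / ‖z‖)) z
      = ∫ z : E2, f ‖z‖ := by
    congr 1; funext z; exact aux_phi_eq z
  rw [h1, MeasureTheory.integral_fun_norm_addHaar volume f, aux_dim, measureReal_def, aux_vol_ball]
  have h2 : ∀ y : ℝ, y ^ (2-1) • f y = (Iio ε).indicator (fun y => y * Real.log (ε / y)) y := by
    intro y
    by_cases h : y < ε <;> simp [hf, Set.indicator, h, smul_eq_mul]
  rw [show (∫ y in Ioi (0:ℝ), y ^ (2-1) • f y)
      = ∫ y in Ioi (0:ℝ), (Iio ε).indicator (fun y => y * Real.log (ε / y)) y from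
      integral_congr_ae (Eventually.of_forall fun y => h2 y),
    setIntegral_indicator measurableSet_Iio, Set.Ioi_inter_Iio,
    ← integral_Ioc_eq_integral_Ioo, ← intervalIntegral.integral_of_le hε.le,
    aux_int_log_div hε]
  rw [ENNReal.toReal_ofReal Real.pi_nonneg]
  simp only [nsmul_eq_mul, smul_eq_mul, Nat.cast_ofNat]
  ring

theorem stmt11 (lam : ℝ) (hlam : 0 < lam) (ε : ℝ) (hε : ε = 1/Real.sqrt (π*lam))
    (w : E2 → ℝ) (hmeas : AEMeasurable w volume)
    (hbound : ∀ᵐ x, 0 ≤ w x ∧ w x ≤ lam)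
    (hint : Integrable w volume) (hmass : ∫ x, w x = 1) :
    ∀ (x : E2) (R : ℝ), 1 < R →
      Integrable (fun y => Real.log (ε / ‖x - y‖) * w y) volume →
      (∫ y, Real.log (ε / ‖x - y‖) * w y) ≤
        1/2 - Real.log R * ∫ y in (Metric.ball x (R*ε))ᶜ, w y := by
  intro x R hR hInt
  have hpl : 0 < π * lam := mul_pos Real.pi_pos hlam
  have hsq : 0 < Real.sqrt (π * lam) := Real.sqrt_pos.mpr hpl
  have hε0 : 0 < ε := by rw [hε]; positivity
  have hε2 : ε^2 = 1/(π*lam) := by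
    rw [hε, div_pow, one_pow, Real.sq_sqrt hpl.le]
  have hR0 : 0 < R := lt_trans one_pos hR
  have hRε : ε ≤ R * ε := by nlinarith
  set Φ : E2 → ℝ := fun z => (Metric.ball (0:E2) ε).indicator
    (fun z => Real.log (ε / ‖z‖)) z with hΦ
  have hΦint : Integrable Φ := aux_phi_integrable hε0
  have h1int : Integrable (fun y => lam * Φ (x - y)) :=
    (hΦint.comp_sub_left x).const_mul lam
  have h2int : Integrable (fun y => ((Metric.ball x (R*ε))ᶜ).indicator
      (fun y => -Real.log R * w y) y) :=
    (hint.const_mul _).indicator measurableSet_ball.compl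
  have hle : ∀ᵐ y, Real.log (ε / ‖x - y‖) * w y ≤
      lam * Φ (x - y) + ((Metric.ball x (R*ε))ᶜ).indicator (fun y => -Real.log R * w y) y := by
    filter_upwards [hbound] with y hy
    obtain ⟨hw0, hwl⟩ := hy
    by_cases hmem : y ∈ Metric.ball x (R*ε)
    · rw [Set.indicator_of_notMem (by simpa using hmem), add_zero]
      by_cases hball : ‖x - y‖ < ε
      · simp only [hΦ]
        rw [Set.indicator_of_mem (mem_ball_zero_iff.2 hball)]
        have hL : 0 ≤ Real.log (ε / ‖x - y‖) := by
          rcases eq_or_lt_of_le (norm_nonneg (x - y)) with h0 | h0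
          · simp [← h0]
          · exact Real.log_nonneg ((one_le_div h0).2 hball.le)
        calc Real.log (ε / ‖x - y‖) * w y ≤ Real.log (ε / ‖x - y‖) * lam :=
              mul_le_mul_of_nonneg_left hwl hL
          _ = lam * Real.log (ε / ‖x - y‖) := mul_comm _ _
      · simp only [hΦ]
        rw [Set.indicator_of_notMem (fun h => hball (mem_ball_zero_iff.1 h)), mul_zero]
        have hlog : Real.log (ε / ‖x - y‖) ≤ 0 :=
          Real.log_nonpos (div_nonneg hε0.le (norm_nonneg _))
            ((div_le_one (lt_of_lt_of_le hε0 (not_lt.1 hball))).2 (not_lt.1 hball))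
        exact mul_nonpos_iff.2 (Or.inr ⟨hlog, hw0⟩)
    · have hdist : R * ε ≤ ‖x - y‖ := by
        have h' : ¬ dist y x < R * ε := fun h => hmem (Metric.mem_ball.2 h)
        rw [dist_eq_norm, norm_sub_rev] at h'
        exact not_lt.1 h'
      have hpos : 0 < ‖x - y‖ := lt_of_lt_of_le (by positivity) hdist
      simp only [hΦ]
      rw [Set.indicator_of_notMem
          (fun h => absurd (mem_ball_zero_iff.1 h) (by push_neg; linarith)), mul_zero, zero_add,
        Set.indicator_of_mem (show y ∈ (Metric.ball x (R * ε))ᶜ from hmem)]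
      have hlog : Real.log (ε / ‖x - y‖) ≤ -Real.log R := by
        have hd : ε / ‖x - y‖ ≤ ε / (R * ε) :=
          div_le_div_of_nonneg_left hε0.le (by positivity) hdist
        have hd2 : ε / (R * ε) = 1/R := by field_simp
        calc Real.log (ε / ‖x - y‖) ≤ Real.log (1/R) := by
              rw [← hd2]
              exact Real.log_le_log (div_pos hε0 hpos) hd
          _ = -Real.log R := by rw [one_div, Real.log_inv]
      exact mul_le_mul_of_nonneg_right hlog hw0
  have key := integral_mono_ae hInt (h1int.add h2int) hle
  simp only [Pi.add_apply] at key
  rw [integral_add h1int h2int, integral_const_mul] at key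
  have e1 : ∫ y, Φ (x - y) = π * ε^2 / 2 := by
    rw [integral_sub_left_eq_self Φ volume x]
    exact aux_phi_integral hε0
  have e2 : (∫ y, ((Metric.ball x (R*ε))ᶜ).indicator (fun y => -Real.log R * w y) y)
      = -Real.log R * ∫ y in (Metric.ball x (R*ε))ᶜ, w y := by
    rw [integral_indicator measurableSet_ball.compl, integral_const_mul]
  rw [e1, e2] at key
  have hhalf : lam * (π * ε^2 / 2) = 1/2 := by
    rw [hε2]
    field_simp
  linarith
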